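/- An edge e of the assignment game is tight (u_i + v_j = w_{ij}) under every core imputation if and only if e belongs to some maximum weight matching (i.e., e is viable or essential). -/

import Mathlib

open scoped Classical

/-- `M` is a matching in the bipartite graph with edge set `E`. -/
def IsMatching {U V : Type*} (E M : Finset (U × V)) : Prop :=
  M ⊆ E ∧ (∀ e ∈ M, ∀ e' ∈ M, e.1 = e'.1 → e = e') ∧
    (∀ e ∈ M, ∀ e' ∈ M, e.2 = e'.2 → e = e')

/-- Total weight of a set of edges. -/
def matchWeight {U V : Type*} (w : U × V → ℚ) (M : Finset (U × V)) : ℚ :=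
  ∑ e ∈ M, w e

/-- Maximum weight of a matching in `(E, w)`. -/
noncomputable def maxWeight {U V : Type*} [DecidableEq U] [DecidableEq V]
    (E : Finset (U × V)) (w : U × V → ℚ) : ℚ :=
  ((E.powerset).filter (fun M => IsMatching E M)).sup'
    ⟨∅, by simp [IsMatching]⟩ (matchWeight w)

/-- `M` is a maximum weight matching. -/
def IsMaxMatching {U V : Type*} [DecidableEq U] [DecidableEq V]
    (E : Finset (U × V)) (w : U × V → ℚ) (M : Finset (U × V)) : Prop :=
  IsMatching E M ∧ matchWeight w M = maxWeight E w

/-- Core imputations of the assignment game (Shapley–Shubik characterization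
as optimal dual solutions). -/
def InCore {U V : Type*} [Fintype U] [Fintype V] [DecidableEq U] [DecidableEq V]
    (E : Finset (U × V)) (w : U × V → ℚ) (u : U → ℚ) (v : V → ℚ) : Prop :=
  (∀ i, 0 ≤ u i) ∧ (∀ j, 0 ≤ v j) ∧ (∀ e ∈ E, w e ≤ u e.1 + v e.2) ∧
    (∑ i, u i) + (∑ j, v j) = maxWeight E w

/-- A vertex (from either side) is matched in `M`. -/
def MatchedIn {U V : Type*} (M : Finset (U × V)) : U ⊕ V → Prop
  | Sum.inl i => ∃ j, (i, j) ∈ M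
  | Sum.inr j => ∃ i, (i, j) ∈ M

/-- A vertex is essential if it is matched in every maximum weight matching. -/
def EssentialVertex {U V : Type*} [DecidableEq U] [DecidableEq V]
    (E : Finset (U × V)) (w : U × V → ℚ) (q : U ⊕ V) : Prop :=
  ∀ M, IsMaxMatching E w M → MatchedIn M q

/-! If `e` lies in a maximum weight matching `M`, complementary slackness forces every core
imputation to be tight on the edges of `M`. Conversely, if `e` lies in no maximum weight matching,
every matching through `e` falls short of the optimum by some `ε > 0`, so raising `w e` by `ε`
does not change the value of the game; a core imputation of the raised game is then a core
imputation of the original one that pays strictly more than `w e` on `e`.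

This needs the core to be nonempty, i.e. LP duality for bipartite matching. After clearing
denominators and embedding the bipartite graph into a square matrix on `U ⊕ V`, this is
Egerváry's theorem, which follows from Hall's theorem: a weight cover of minimal total value has
a perfect matching of tight pairs, since otherwise a Hall-deficient set could be used to lower
the cover. -/

open Finset

section Matchings

variable {U V : Type*}

lemma IsMatching.singleton {E : Finset (U × V)} {e : U × V} (he : e ∈ E) :
    IsMatching E {e} := by
  refine ⟨singleton_subset_iff.mpr he, ?_, ?_⟩ <;> simp

lemma IsMatching.mono {E E' M : Finset (U × V)} (hM : IsMatching E M) (hE : E ⊆ E') :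
    IsMatching E' M :=
  ⟨hM.1.trans hE, hM.2⟩

variable [DecidableEq U] [DecidableEq V]

lemma maxWeight_le_iff {E : Finset (U × V)} {w : U × V → ℚ} {c : ℚ} :
    maxWeight E w ≤ c ↔ ∀ M, IsMatching E M → matchWeight w M ≤ c := by
  refine ⟨fun h M hM => (le_sup' (matchWeight w) ?_).trans h, fun h => sup'_le _ _ ?_⟩
  · exact mem_filter.mpr ⟨mem_powerset.mpr hM.1, hM⟩
  · exact fun M hM => h M (mem_filter.mp hM).2

lemma IsMatching.matchWeight_le_maxWeight {E M : Finset (U × V)} (hM : IsMatching E M)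
    (w : U × V → ℚ) : matchWeight w M ≤ maxWeight E w :=
  maxWeight_le_iff.mp le_rfl M hM

lemma exists_isMaxMatching (E : Finset (U × V)) (w : U × V → ℚ) :
    ∃ M, IsMaxMatching E w M := by
  obtain ⟨M, hM, hMw⟩ := exists_mem_eq_sup'
    (⟨∅, by simp [IsMatching]⟩ : (E.powerset.filter (IsMatching E)).Nonempty) (matchWeight w)
  exact ⟨M, (mem_filter.mp hM).2, hMw.symm⟩

lemma maxWeight_mono {E E' : Finset (U × V)} (hE : E ⊆ E') (w : U × V → ℚ) :
    maxWeight E w ≤ maxWeight E' w :=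
  maxWeight_le_iff.mpr fun _ hM => (hM.mono hE).matchWeight_le_maxWeight w

lemma exists_pos_matchWeight_add_le_maxWeight {E : Finset (U × V)} {w : U × V → ℚ}
    {e : U × V} (he : e ∈ E) (hno : ∀ M, IsMaxMatching E w M → e ∉ M) :
    ∃ ε > 0, ∀ M, IsMatching E M → e ∈ M → matchWeight w M + ε ≤ maxWeight E w := by
  set S := E.powerset.filter fun M => IsMatching E M ∧ e ∈ M
  have hS : S.Nonempty := ⟨{e}, by simp [S, IsMatching.singleton he, he]⟩
  obtain ⟨M₀, hM₀, hM₀w⟩ := exists_mem_eq_sup' hS (matchWeight w)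
  obtain ⟨-, hM₀match, heM₀⟩ := mem_filter.mp hM₀
  have hlt : S.sup' hS (matchWeight w) < maxWeight E w :=
    hM₀w ▸ (hM₀match.matchWeight_le_maxWeight w).lt_of_ne fun h => hno M₀ ⟨hM₀match, h⟩ heM₀
  refine ⟨_, sub_pos.mpr hlt, fun M hM heM => ?_⟩
  have := le_sup' (matchWeight w) (mem_filter.mpr ⟨mem_powerset.mpr hM.1, hM, heM⟩ : M ∈ S)
  linarith

lemma matchWeight_add_ite_eq (w : U × V → ℚ) (e : U × V) (ε : ℚ) (M : Finset (U × V)) :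
    matchWeight (fun p => w p + if p = e then ε else 0) M =
      matchWeight w M + if e ∈ M then ε else 0 := by
  simp only [matchWeight, sum_add_distrib, sum_ite_eq']

variable [Fintype U] [Fintype V]

lemma IsMatching.sum_dual_le {E M : Finset (U × V)} (hM : IsMatching E M)
    {u : U → ℚ} {v : V → ℚ} (hu : ∀ i, 0 ≤ u i) (hv : ∀ j, 0 ≤ v j) :
    ∑ p ∈ M, (u p.1 + v p.2) ≤ (∑ i, u i) + (∑ j, v j) := by
  rw [sum_add_distrib, ← sum_image hM.2.1, ← sum_image hM.2.2]
  exact add_le_add (sum_le_sum_of_subset_of_nonneg (subset_univ _) fun i _ _ => hu i)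
    (sum_le_sum_of_subset_of_nonneg (subset_univ _) fun j _ _ => hv j)

lemma IsMatching.matchWeight_le {E M : Finset (U × V)} (hM : IsMatching E M)
    {w : U × V → ℚ} {u : U → ℚ} {v : V → ℚ} (hu : ∀ i, 0 ≤ u i) (hv : ∀ j, 0 ≤ v j)
    (hfeas : ∀ p ∈ E, w p ≤ u p.1 + v p.2) :
    matchWeight w M ≤ (∑ i, u i) + (∑ j, v j) :=
  (sum_le_sum fun p hp => hfeas p (hM.1 hp)).trans (hM.sum_dual_le hu hv)

lemma inCore_iff {E : Finset (U × V)} {w : U × V → ℚ} {u : U → ℚ} {v : V → ℚ} :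
    InCore E w u v ↔ (∀ i, 0 ≤ u i) ∧ (∀ j, 0 ≤ v j) ∧ (∀ p ∈ E, w p ≤ u p.1 + v p.2) ∧
      (∑ i, u i) + (∑ j, v j) ≤ maxWeight E w := by
  refine ⟨fun ⟨hu, hv, hfeas, hsum⟩ => ⟨hu, hv, hfeas, hsum.le⟩,
    fun ⟨hu, hv, hfeas, hsum⟩ => ⟨hu, hv, hfeas, hsum.antisymm ?_⟩⟩
  obtain ⟨M, hM, hMw⟩ := exists_isMaxMatching E w
  exact hMw ▸ hM.matchWeight_le hu hv hfeas

lemma InCore.tight_of_mem {E M : Finset (U × V)} {w : U × V → ℚ} {u : U → ℚ} {v : V → ℚ}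
    (hcore : InCore E w u v) (hM : IsMaxMatching E w M) {e : U × V} (he : e ∈ M) :
    u e.1 + v e.2 = w e := by
  obtain ⟨hu, hv, hfeas, hsum⟩ := hcore
  have hslack : ∀ p ∈ M, 0 ≤ u p.1 + v p.2 - w p := fun p hp => sub_nonneg.mpr (hfeas p (hM.1.1 hp))
  have hzero : ∑ p ∈ M, (u p.1 + v p.2 - w p) = 0 := by
    refine le_antisymm ?_ (sum_nonneg hslack)
    have := hM.1.sum_dual_le hu hv
    have hw : ∑ p ∈ M, w p = (∑ i, u i) + (∑ j, v j) := by rw [hsum, ← hM.2, matchWeight]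
    rw [sum_sub_distrib, hw]
    linarith
  exact sub_eq_zero.mp ((sum_eq_zero_iff_of_nonneg hslack).mp hzero e he)

end Matchings

section Egervary

variable {X : Type*} [Fintype X]

def IsWeightCover (W : X → X → ℤ) (u v : X → ℤ) : Prop :=
  ∀ i j, W i j ≤ u i + v j

lemma exists_minimal_weightCover (W : X → X → ℤ) :
    ∃ u v, IsWeightCover W u v ∧
      ∀ u' v', IsWeightCover W u' v' → (∑ i, u i) + (∑ j, v j) ≤ (∑ i, u' i) + (∑ j, v' j) := by
  let IsCoverSum : ℤ → Prop := fun s =>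
    ∃ u v, IsWeightCover W u v ∧ (∑ i, u i) + (∑ j, v j) = s
  have hbdd : ∃ b, ∀ s, IsCoverSum s → b ≤ s := by
    refine ⟨∑ i, W i i, ?_⟩
    rintro s ⟨u, v, hcover, rfl⟩
    rw [← sum_add_distrib]
    exact sum_le_sum fun i _ => hcover i i
  have hinh : ∃ s, IsCoverSum s := by
    refine ⟨_, fun i => ∑ j, |W i j|, 0, fun i j => ?_, rfl⟩
    simpa using (le_abs_self _).trans (single_le_sum (fun k _ => abs_nonneg (W i k)) (mem_univ j))
  obtain ⟨s, ⟨u, v, hcover, rfl⟩, hmin⟩ := Int.exists_least_of_bdd hbdd hinh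
  exact ⟨u, v, hcover, fun u' v' hcover' => hmin _ ⟨u', v', hcover', rfl⟩⟩

variable [DecidableEq X]

lemma IsWeightCover.card_le_card_biUnion_tight {W : X → X → ℤ} {u v : X → ℤ}
    (hcover : IsWeightCover W u v)
    (hmin : ∀ u' v', IsWeightCover W u' v' → (∑ i, u i) + (∑ j, v j) ≤ (∑ i, u' i) + (∑ j, v' j))
    (s : Finset X) : #s ≤ #(s.biUnion fun i => univ.filter fun j => u i + v j = W i j) := by
  set N := s.biUnion fun i => univ.filter fun j => u i + v j = W i j
  by_contra! hdeficient
  let u' : X → ℤ := fun i => u i - if i ∈ s then 1 else 0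
  let v' : X → ℤ := fun j => v j + if j ∈ N then 1 else 0
  have hcover' : IsWeightCover W u' v' := by
    intro i j
    have := hcover i j
    by_cases hi : i ∈ s
    · by_cases hj : j ∈ N
      · simp only [u', v', hi, hj, if_true]
        omega
      · have hslack : W i j < u i + v j :=
          lt_of_le_of_ne this fun h => hj (mem_biUnion.mpr ⟨i, hi, by simp [h]⟩)
        simp only [u', v', hi, hj, if_true, if_false]
        omega
    · simp only [u', v', hi, if_false]
      split <;> omega
  have hsum : (∑ i, u' i) + (∑ j, v' j) = (∑ i, u i) + (∑ j, v j) - #s + #N := by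
    simp only [u', v', sum_sub_distrib, sum_add_distrib, sum_boole, filter_mem_eq_inter,
      univ_inter]
    ring
  have := hmin u' v' hcover'
  omega

/-- Egerváry's theorem for square integer matrices. -/
lemma exists_perm_weightCover_sum_eq (W : X → X → ℤ) :
    ∃ u v, IsWeightCover W u v ∧ ∃ σ : Equiv.Perm X, (∑ i, u i) + (∑ j, v j) = ∑ i, W i (σ i) := by
  obtain ⟨u, v, hcover, hmin⟩ := exists_minimal_weightCover W
  obtain ⟨f, hf, hftight⟩ := (all_card_le_biUnion_card_iff_exists_injective _).mp
    (hcover.card_le_card_biUnion_tight hmin)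
  have hfbij : Function.Bijective f := Finite.injective_iff_bijective.mp hf
  refine ⟨u, v, hcover, Equiv.ofBijective f hfbij, ?_⟩
  calc (∑ i, u i) + (∑ j, v j) = ∑ i, (u i + v (f i)) := by
        rw [sum_add_distrib, hfbij.sum_comp v]
    _ = ∑ i, W i (f i) := sum_congr rfl fun i _ => by simpa using hftight i

lemma exists_perm_nonneg_weightCover_sum_eq {W : X → X → ℤ} (hW : ∀ i j, 0 ≤ W i j) :
    ∃ u v, (∀ i, 0 ≤ u i) ∧ (∀ j, 0 ≤ v j) ∧ IsWeightCover W u v ∧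
      ∃ σ : Equiv.Perm X, (∑ i, u i) + (∑ j, v j) = ∑ i, W i (σ i) := by
  obtain ⟨u, v, hcover, σ, hsum⟩ := exists_perm_weightCover_sum_eq W
  rcases isEmpty_or_nonempty X with hX | hX
  · exact ⟨u, v, hX.elim, hX.elim, hcover, σ, hsum⟩
  -- shifting by `c = min v` keeps the cover and its sum, and makes both parts nonnegative
  set c := univ.inf' univ_nonempty v
  obtain ⟨j₀, -, hj₀⟩ := exists_mem_eq_inf' univ_nonempty v
  refine ⟨fun i => u i + c, fun j => v j - c, fun i => ?_, fun j => ?_, fun i j => ?_, σ, ?_⟩ <;>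
    dsimp only
  · have := hcover i j₀
    have := hW i j₀
    omega
  · have : c ≤ v j := inf'_le v (mem_univ j)
    omega
  · have := hcover i j
    omega
  · simp only [sum_add_distrib, sum_sub_distrib, sum_const, card_univ]
    omega

end Egervary

section Bipartite

variable {U V : Type*} [DecidableEq U] [DecidableEq V]

def squareWeight (E : Finset (U × V)) (W : U × V → ℤ) : U ⊕ V → U ⊕ V → ℤ
  | Sum.inl i, Sum.inr j => if (i, j) ∈ E then W (i, j) else 0
  | _, _ => 0

lemma squareWeight_inr (E : Finset (U × V)) (W : U × V → ℤ) (j : V) (b : U ⊕ V) :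
    squareWeight E W (Sum.inr j) b = 0 := by
  cases b <;> rfl

lemma squareWeight_nonneg {E : Finset (U × V)} {W : U × V → ℤ} (hW : ∀ p ∈ E, 0 ≤ W p)
    (a b : U ⊕ V) : 0 ≤ squareWeight E W a b := by
  rcases a with i | j <;> rcases b with i' | j' <;> simp only [squareWeight, le_refl]
  split_ifs with h
  exacts [hW _ h, le_rfl]

def permMatching (E : Finset (U × V)) (σ : Equiv.Perm (U ⊕ V)) : Finset (U × V) :=
  E.filter fun p => σ (Sum.inl p.1) = Sum.inr p.2

lemma isMatching_permMatching (E : Finset (U × V)) (σ : Equiv.Perm (U ⊕ V)) :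
    IsMatching E (permMatching E σ) := by
  refine ⟨filter_subset _ _, fun p hp q hq h => ?_, fun p hp q hq h => ?_⟩ <;>
    simp only [permMatching, mem_filter] at hp hq
  · have := hp.2.symm.trans (h ▸ hq.2)
    exact Prod.ext h (Sum.inr_injective this)
  · have := σ.injective (hp.2.trans (h ▸ hq.2.symm))
    exact Prod.ext (Sum.inl_injective this) h

variable [Fintype U] [Fintype V]

lemma sum_squareWeight_perm (E : Finset (U × V)) (W : U × V → ℤ) (σ : Equiv.Perm (U ⊕ V)) :
    ∑ a, squareWeight E W a (σ a) = ∑ p ∈ permMatching E σ, W p := by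
  have hrow : ∀ i, squareWeight E W (Sum.inl i) (σ (Sum.inl i)) =
      ∑ j, if σ (Sum.inl i) = Sum.inr j ∧ (i, j) ∈ E then W (i, j) else 0 := by
    intro i
    rcases σ (Sum.inl i) with i' | j₀
    · simp [squareWeight]
    · simp [squareWeight, ite_and]
  rw [Fintype.sum_sum_type, sum_congr rfl fun j _ => squareWeight_inr E W j _, sum_const_zero,
    add_zero, sum_congr rfl fun i _ => hrow i, ← Fintype.sum_prod_type', ← sum_filter]
  congr 1
  ext p
  simp [permMatching, and_comm]

lemma exists_nonneg_int_cover_le_matching {E : Finset (U × V)} {W : U × V → ℤ}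
    (hW : ∀ p ∈ E, 0 ≤ W p) :
    ∃ (u : U → ℤ) (v : V → ℤ), (∀ i, 0 ≤ u i) ∧ (∀ j, 0 ≤ v j) ∧
      (∀ p ∈ E, W p ≤ u p.1 + v p.2) ∧
      ∃ M, IsMatching E M ∧ (∑ i, u i) + (∑ j, v j) ≤ ∑ p ∈ M, W p := by
  obtain ⟨u, v, hu, hv, hcover, σ, hsum⟩ :=
    exists_perm_nonneg_weightCover_sum_eq (squareWeight_nonneg hW)
  refine ⟨fun i => u (Sum.inl i), fun j => v (Sum.inr j), fun i => hu _, fun j => hv _,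
    fun p hp => by simpa [squareWeight, hp] using hcover (Sum.inl p.1) (Sum.inr p.2),
    permMatching E σ, isMatching_permMatching E σ, ?_⟩
  rw [← sum_squareWeight_perm, ← hsum, Fintype.sum_sum_type u, Fintype.sum_sum_type v]
  have := sum_nonneg fun j (_ : j ∈ univ) => hu (Sum.inr j)
  have := sum_nonneg fun i (_ : i ∈ univ) => hv (Sum.inl i)
  linarith

end Bipartite

lemma exists_nat_mul_eq_intCast {ι : Type*} (s : Finset ι) (f : ι → ℚ) :
    ∃ N : ℕ, 0 < N ∧ ∃ z : ι → ℤ, ∀ i ∈ s, (z i : ℚ) = N * f i := by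
  refine ⟨∏ i ∈ s, (f i).den, prod_pos fun i _ => (f i).den_pos,
    fun i => (f i).num * ((∏ i ∈ s, (f i).den) / (f i).den : ℕ), fun i hi => ?_⟩
  have hdvd : (f i).den ∣ ∏ i ∈ s, (f i).den := dvd_prod_of_mem _ hi
  rw [Int.cast_mul, Int.cast_natCast, Nat.cast_div hdvd (by simp)]
  field_simp
  exact (Rat.den_mul_eq_num _).symm

section Core

variable {U V : Type*} [Fintype U] [Fintype V] [DecidableEq U] [DecidableEq V]

lemma exists_inCore_of_nonneg {E : Finset (U × V)} {w : U × V → ℚ} (hw : ∀ p ∈ E, 0 ≤ w p) :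
    ∃ u v, InCore E w u v := by
  obtain ⟨N, hN, W, hW⟩ := exists_nat_mul_eq_intCast E w
  have hNq : (0 : ℚ) < N := Nat.cast_pos.mpr hN
  obtain ⟨u, v, hu, hv, hcover, M, hM, hsum⟩ := exists_nonneg_int_cover_le_matching
    (W := W) fun p hp => by exact_mod_cast (hW p hp).symm ▸ mul_nonneg hNq.le (hw p hp)
  refine ⟨fun i => u i / N, fun j => v j / N, inCore_iff.mpr
    ⟨fun i => div_nonneg (by exact_mod_cast hu i) hNq.le,
      fun j => div_nonneg (by exact_mod_cast hv j) hNq.le, fun p hp => ?_, ?_⟩⟩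
  · rw [← add_div, le_div_iff₀ hNq, mul_comm, ← hW p hp]
    exact_mod_cast hcover p hp
  · refine le_trans ?_ (hM.matchWeight_le_maxWeight w)
    rw [← sum_div, ← sum_div, ← add_div, div_le_iff₀ hNq, matchWeight, sum_mul]
    calc (∑ i, (u i : ℚ)) + ∑ j, (v j : ℚ) ≤ ∑ p ∈ M, (W p : ℚ) := by exact_mod_cast hsum
      _ = ∑ p ∈ M, w p * N :=
        sum_congr rfl fun p hp => by rw [hW p (hM.1 hp), mul_comm]

/-- Edges of negative weight never constrain a nonnegative imputation. -/
lemma exists_inCore (E : Finset (U × V)) (w : U × V → ℚ) : ∃ u v, InCore E w u v := by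
  obtain ⟨u, v, hcore⟩ := exists_inCore_of_nonneg (E := E.filter (0 ≤ w ·)) fun p hp =>
    (mem_filter.mp hp).2
  obtain ⟨hu, hv, hfeas, hsum⟩ := inCore_iff.mp hcore
  refine ⟨u, v, inCore_iff.mpr ⟨hu, hv, fun p hp => ?_,
    hsum.trans (maxWeight_mono (filter_subset _ _) w)⟩⟩
  by_cases hwp : 0 ≤ w p
  · exact hfeas p (mem_filter.mpr ⟨hp, hwp⟩)
  · linarith [hu p.1, hv p.2]

lemma exists_inCore_lt_of_forall_not_mem {E : Finset (U × V)} {w : U × V → ℚ} {e : U × V}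
    (he : e ∈ E) (hno : ∀ M, IsMaxMatching E w M → e ∉ M) :
    ∃ u v, InCore E w u v ∧ w e < u e.1 + v e.2 := by
  obtain ⟨ε, hε, hgap⟩ := exists_pos_matchWeight_add_le_maxWeight he hno
  set w' : U × V → ℚ := fun p => w p + if p = e then ε else 0
  have hww' : ∀ p, w p ≤ w' p := fun p => by
    simp only [w']
    split_ifs <;> linarith
  have hmax : maxWeight E w' ≤ maxWeight E w := maxWeight_le_iff.mpr fun M hM => by
    rw [matchWeight_add_ite_eq]
    split_ifs with heM
    · exact hgap M hM heM
    · simpa using hM.matchWeight_le_maxWeight w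
  obtain ⟨u, v, hcore⟩ := exists_inCore E w'
  obtain ⟨hu, hv, hfeas, hsum⟩ := inCore_iff.mp hcore
  refine ⟨u, v, inCore_iff.mpr ⟨hu, hv, fun p hp => (hww' p).trans (hfeas p hp),
    hsum.trans hmax⟩, ?_⟩
  have := hfeas e he
  simp only [w', if_pos] at this
  linarith

end Core

theorem always_tight_iff_in_some_max_matching_general {U V : Type*} [Fintype U] [Fintype V]
    [DecidableEq U] [DecidableEq V]
    (E : Finset (U × V)) (w : U × V → ℚ)
    (e : U × V) (he : e ∈ E) :
    (∀ (u : U → ℚ) (v : V → ℚ), InCore E w u v → u e.1 + v e.2 = w e) ↔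
      (∃ M, IsMaxMatching E w M ∧ e ∈ M) := by
  refine ⟨fun htight => ?_, fun ⟨M, hM, heM⟩ u v hcore => hcore.tight_of_mem hM heM⟩
  by_contra! hno
  obtain ⟨u, v, hcore, hlt⟩ := exists_inCore_lt_of_forall_not_mem he hno
  exact hlt.ne' (htight u v hcore)

/-- An edge is tight under every core imputation iff it belongs to some maximum
weight matching (i.e. it is viable or essential). -/
theorem always_tight_iff_in_some_max_matching {U V : Type*} [Fintype U] [Fintype V]
    [DecidableEq U] [DecidableEq V]
    (E : Finset (U × V)) (w : U × V → ℚ) (hw : ∀ e ∈ E, 0 < w e)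
    (e : U × V) (he : e ∈ E) :
    (∀ (u : U → ℚ) (v : V → ℚ), InCore E w u v → u e.1 + v e.2 = w e) ↔
      (∃ M, IsMaxMatching E w M ∧ e ∈ M) :=
  always_tight_iff_in_some_max_matching_general E w e he
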